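/- arXiv:2603.04903 — 4 statements merged into one kernel-verified Lean document; each statement's English description precedes it below -/
import Mathlib

section
/- Define φ' : ℂ × ℂ⁴ → ℂ⁴ by φ'_τ(x,y,s,t) = (x, y − 3t²τ − 3tx²τ² − x⁴τ³, s, t + x²τ). Then (i) φ'_0 = id and φ'_{τ+σ} = φ'_τ ∘ φ'_σ for all τ, σ ∈ ℂ (so each φ'_τ is a bijection of ℂ⁴); (ii) for every p ∈ ℂ⁴ the curve τ ↦ φ'_τ(p) has complex derivative V_x'(φ'_τ(p)); and (iii) F ∘ φ'_τ = F for every τ, so each φ'_τ maps the Koras–Russell cubic KR = F⁻¹(0) onto itself. In particular the vector field V_x' is complete. -/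
/-- The defining polynomial of the Koras–Russell cubic threefold:
`F(x,y,s,t) = x²y + x + s² + t³`. -/
noncomputable def F : ℂ × ℂ × ℂ × ℂ → ℂ :=
  fun p => p.1 ^ 2 * p.2.1 + p.1 + p.2.2.1 ^ 2 + p.2.2.2 ^ 3

/-- The vector field `V_x'(x,y,s,t) = (0, −3t², 0, x²)` on `ℂ⁴`. -/
noncomputable def Vx' : ℂ × ℂ × ℂ × ℂ → ℂ × ℂ × ℂ × ℂ :=
  fun p => (0, -3 * p.2.2.2 ^ 2, 0, p.1 ^ 2)

/-- The flow `φ'_τ(x,y,s,t) = (x, y − 3t²τ − 3tx²τ² − x⁴τ³, s, t + x²τ)` of the vector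
field `V_x'`. -/
noncomputable def phi' : ℂ → ℂ × ℂ × ℂ × ℂ → ℂ × ℂ × ℂ × ℂ :=
  fun τ p => (p.1,
    p.2.1 - 3 * p.2.2.2 ^ 2 * τ - 3 * p.2.2.2 * p.1 ^ 2 * τ ^ 2 - p.1 ^ 4 * τ ^ 3,
    p.2.2.1, p.2.2.2 + p.1 ^ 2 * τ)

/-- (i) `φ'_0 = id` and `φ'_{τ+σ} = φ'_τ ∘ φ'_σ` for all `τ, σ ∈ ℂ` (so each `φ'_τ` is a
bijection of `ℂ⁴`); (ii) for every `p ∈ ℂ⁴` the curve `τ ↦ φ'_τ(p)` has complex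
derivative `V_x'(φ'_τ(p))`; and (iii) `F ∘ φ'_τ = F` for every `τ`, so each `φ'_τ` maps
the Koras–Russell cubic `KR = F⁻¹(0)` onto itself. In particular `V_x'` is complete. -/
theorem stmt_5 :
    (∀ p, phi' 0 p = p) ∧
    (∀ τ σ : ℂ, ∀ p, phi' (τ + σ) p = phi' τ (phi' σ p)) ∧
    (∀ τ : ℂ, Function.Bijective (phi' τ)) ∧
    (∀ (p : ℂ × ℂ × ℂ × ℂ) (τ : ℂ), HasDerivAt (fun s => phi' s p) (Vx' (phi' τ p)) τ) ∧
    (∀ τ : ℂ, F ∘ phi' τ = F) ∧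
    (∀ τ : ℂ, phi' τ '' (F ⁻¹' {0}) = F ⁻¹' {0}) := by
  have h0 : ∀ p, phi' 0 p = p := by
    intro p; simp [phi']
  have hadd : ∀ τ σ : ℂ, ∀ p, phi' (τ + σ) p = phi' τ (phi' σ p) := by
    intro τ σ p
    refine Prod.ext rfl (Prod.ext ?_ (Prod.ext rfl ?_)) <;> simp only [phi'] <;> ring
  have hbij : ∀ τ : ℂ, Function.Bijective (phi' τ) := by
    intro τ
    refine Function.bijective_iff_has_inverse.2 ⟨phi' (-τ), ?_, ?_⟩
    · intro p; rw [← hadd]; simp [h0]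
    · intro p; rw [← hadd]; simp [h0]
  have hF : ∀ τ : ℂ, F ∘ phi' τ = F := by
    intro τ; funext p; simp only [F, phi', Function.comp]; ring
  refine ⟨h0, hadd, hbij, ?_, hF, ?_⟩
  · intro p τ
    simp only [phi', Vx']
    refine HasDerivAt.prodMk (hasDerivAt_const _ _) (HasDerivAt.prodMk ?_ (HasDerivAt.prodMk (hasDerivAt_const _ _) ?_))
    · have : HasDerivAt (fun s : ℂ => p.2.1 - 3 * p.2.2.2 ^ 2 * s - 3 * p.2.2.2 * p.1 ^ 2 * s ^ 2 - p.1 ^ 4 * s ^ 3)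
        (-(3 * p.2.2.2 ^ 2) - 3 * p.2.2.2 * p.1 ^ 2 * (2 * τ) - p.1 ^ 4 * (3 * τ ^ 2)) τ := by
        have h1 := (hasDerivAt_id τ).const_mul (3 * p.2.2.2 ^ 2)
        have h2 := ((hasDerivAt_pow 2 τ)).const_mul (3 * p.2.2.2 * p.1 ^ 2)
        have h3 := ((hasDerivAt_pow 3 τ)).const_mul (p.1 ^ 4)
        have := (((hasDerivAt_const τ p.2.1).sub h1).sub h2).sub h3
        exact this.congr_deriv (by simp only [Nat.cast_ofNat, Nat.reduceSub, pow_one]; ring)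
      exact this.congr_deriv (by ring)
    · have := (hasDerivAt_id τ).const_mul (p.1 ^ 2)
      have h := (hasDerivAt_const τ p.2.2.2).add this
      exact h.congr_deriv (by ring)
  · intro τ
    ext p
    constructor
    · rintro ⟨q, hq, rfl⟩
      simp only [Set.mem_preimage, Set.mem_singleton_iff] at hq ⊢
      have := congrFun (hF τ) q
      simpa [Function.comp, hq] using this
    · intro hp
      refine ⟨phi' (-τ) p, ?_, ?_⟩
      · simp only [Set.mem_preimage, Set.mem_singleton_iff] at hp ⊢
        have := congrFun (hF (-τ)) p
        simpa [Function.comp, hp] using this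
      · rw [← hadd]; simp [h0]
end

section
/- Let n ≥ 2 and 1 ≤ i ≠ j ≤ n. Define ψ : ℂ × M_n(ℂ) → M_n(ℂ) by ψ_t(A) = (1 + λ(t,A)·E_{ji})·A, where λ(t,A) = tr(A)·(e^{t·A_{ij}} − 1)/A_{ij} if A_{ij} ≠ 0 and λ(t,A) = tr(A)·t if A_{ij} = 0. Then (i) ψ_0 = id and ψ_{t+u} = ψ_t ∘ ψ_u for all t, u ∈ ℂ; (ii) for every A the curve t ↦ ψ_t(A) has complex derivative V_{ij}(ψ_t(A)) = tr(ψ_t(A))·(E_{ji}·ψ_t(A)); (iii) det(ψ_t(A)) = det(A) for all t; and (iv) tr(ψ_t(A)) = tr(A)·e^{t·A_{ij}} for all t. In particular V_{ij} is a complete vector field whose flow preserves SL_n(ℂ) and the hypersurface {tr = 0}. -/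
/- Equip `M_n(ℂ)` with the (elementwise sup) norm, identifying it with `ℂ^{n²}`;
derivatives do not depend on the choice of norm. -/
attribute [local instance] Matrix.normedAddCommGroup Matrix.normedSpace

/-- The coefficient `λ(t,A) = tr(A)·(e^{t·A_{ij}} − 1)/A_{ij}` if `A_{ij} ≠ 0`, and
`λ(t,A) = tr(A)·t` if `A_{ij} = 0`. -/
noncomputable def lam {n : ℕ} (i j : Fin n) (t : ℂ) (A : Matrix (Fin n) (Fin n) ℂ) : ℂ :=
  if A i j ≠ 0 then A.trace * (Complex.exp (t * A i j) - 1) / A i j else A.trace * t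

/-- The flow `ψ_t(A) = (1 + λ(t,A)·E_{ji})·A` of the vector field
`V_{ij}(A) = tr(A)·(E_{ji}·A)`. -/
noncomputable def psi {n : ℕ} (i j : Fin n) (t : ℂ) (A : Matrix (Fin n) (Fin n) ℂ) :
    Matrix (Fin n) (Fin n) ℂ :=
  (1 + lam i j t A • Matrix.single j i 1) * A

section aux

variable {n : ℕ} {i j : Fin n} (hij : i ≠ j)

lemma psi_eq (t : ℂ) (A : Matrix (Fin n) (Fin n) ℂ) :
    psi i j t A = A + lam i j t A • (Matrix.single j i 1 * A) := by
  simp only [psi, Matrix.add_mul, Matrix.one_mul, Matrix.smul_mul]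

include hij

lemma trace_EA (A : Matrix (Fin n) (Fin n) ℂ) :
    (Matrix.single j i 1 * A).trace = A i j := by
  rw [Matrix.trace]
  rw [Finset.sum_eq_single j]
  · simp [Matrix.diag]
  · intro b _ hb
    simp [Matrix.diag, hb]
  · simp

lemma EA_apply_ij (A : Matrix (Fin n) (Fin n) ℂ) :
    (Matrix.single j i (1:ℂ) * A) i j = 0 := by
  simp [hij]

lemma psi_apply_ij (t : ℂ) (A : Matrix (Fin n) (Fin n) ℂ) :
    psi i j t A i j = A i j := by
  rw [psi_eq]
  simp [EA_apply_ij hij]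

lemma trace_psi (t : ℂ) (A : Matrix (Fin n) (Fin n) ℂ) :
    (psi i j t A).trace = A.trace * Complex.exp (t * A i j) := by
  rw [psi_eq, Matrix.trace_add, Matrix.trace_smul, trace_EA hij, lam]
  by_cases h : A i j = 0
  · simp [h]
  · rw [if_pos h]
    field_simp
    rw [mul_comm t (A i j)]
    linear_combination (A.trace * Complex.exp (A i j * t) - A.trace) * mul_inv_cancel₀ h

lemma lam_add (t u : ℂ) (A : Matrix (Fin n) (Fin n) ℂ) :
    lam i j t (psi i j u A) + lam i j u A = lam i j (t + u) A := by
  unfold lam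
  rw [psi_apply_ij hij, trace_psi hij]
  by_cases h : A i j = 0
  · simp [h]; ring
  · rw [if_pos h, if_pos h, if_pos h]
    field_simp
    rw [mul_add (A i j) t u, Complex.exp_add, mul_comm (A i j) u]
    ring

end aux

/-- (i) `ψ_0 = id` and `ψ_{t+u} = ψ_t ∘ ψ_u`; (ii) the curve `t ↦ ψ_t(A)` has complex
derivative `V_{ij}(ψ_t(A)) = tr(ψ_t(A))·(E_{ji}·ψ_t(A))`; (iii) `det(ψ_t(A)) = det(A)`;
(iv) `tr(ψ_t(A)) = tr(A)·e^{t·A_{ij}}`. In particular `V_{ij}` is a complete vector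
field whose flow preserves `SL_n(ℂ)` and the hypersurface `{tr = 0}`. -/
theorem stmt_10 (n : ℕ) (hn : 2 ≤ n) (i j : Fin n) (hij : i ≠ j) :
    (∀ A, psi i j 0 A = A) ∧
    (∀ (t u : ℂ) (A), psi i j (t + u) A = psi i j t (psi i j u A)) ∧
    (∀ (A : Matrix (Fin n) (Fin n) ℂ) (t : ℂ),
      HasDerivAt (fun s => psi i j s A)
        ((psi i j t A).trace • (Matrix.single j i 1 * psi i j t A)) t) ∧
    (∀ (t : ℂ) (A : Matrix (Fin n) (Fin n) ℂ), (psi i j t A).det = A.det) ∧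
    (∀ (t : ℂ) (A : Matrix (Fin n) (Fin n) ℂ),
      (psi i j t A).trace = A.trace * Complex.exp (t * A i j)) := by
  have hE2 : (Matrix.single j i (1:ℂ)) * Matrix.single j i 1 = 0 :=
    Matrix.single_mul_single_of_ne (c := 1) j i j hij 1
  refine ⟨?_, ?_, ?_, ?_, fun t A => trace_psi hij t A⟩
  · intro A
    have h0 : lam i j 0 A = 0 := by
      unfold lam
      by_cases h : A i j = 0 <;> simp [h]
    rw [psi, h0]
    simp
  · intro t u A
    have hEpsi : Matrix.single j i (1:ℂ) * psi i j u A =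
        Matrix.single j i (1:ℂ) * A := by
      rw [psi_eq, Matrix.mul_add, Matrix.mul_smul, ← Matrix.mul_assoc, hE2]
      simp
    rw [psi_eq (t + u) A, psi_eq t (psi i j u A), hEpsi, ← lam_add hij t u A, add_smul,
      psi_eq u A]
    abel
  · intro A t
    set c := A i j with hc
    set M := Matrix.single j i (1:ℂ) * A with hM
    have hEpsi : Matrix.single j i (1:ℂ) * psi i j t A = M := by
      rw [psi_eq, Matrix.mul_add, Matrix.mul_smul, ← Matrix.mul_assoc, hE2]
      simp
      exact hM.symm
    rw [hEpsi, trace_psi hij]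
    have hlam : HasDerivAt (fun s => lam i j s A) (A.trace * Complex.exp (t * c)) t := by
      by_cases h : c = 0
      · have : (fun s => lam i j s A) = fun s => A.trace * s := by
          funext s; unfold lam; rw [← hc, if_neg (by simp [h])]
        rw [this, h]
        simpa using (hasDerivAt_id t).const_mul A.trace
      · have : (fun s => lam i j s A) = fun s =>
            A.trace / c * (Complex.exp (s * c) - 1) := by
          funext s; unfold lam; rw [← hc, if_pos h]; ring
        rw [this]
        have hexp : HasDerivAt (fun s : ℂ => Complex.exp (s * c))
            (Complex.exp (t * c) * c) t := by
          simpa using ((hasDerivAt_id t).mul_const c).cexp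
        have := ((hexp.sub_const 1).const_mul (A.trace / c))
        refine this.congr_deriv ?_
        field_simp
      ;
    have := (hlam.smul_const M).const_add A
    refine this.congr_of_eventuallyEq (Filter.Eventually.of_forall fun s => ?_)
    exact psi_eq s A
    ;
  · intro t A
    have : psi i j t A = Matrix.transvection j i (lam i j t A) * A := by
      rw [psi, Matrix.transvection, Matrix.smul_single, smul_eq_mul, mul_one]
    rw [this, Matrix.det_mul, Matrix.det_transvection_of_ne _ _ hij.symm, one_mul]
end

section
/- Let n ≥ 2. For 1 ≤ i ≠ j ≤ n and t ∈ ℂ define the row move R_{ij,t}(A) = (1 + λ·E_{ji})·A with λ = tr(A)·(e^{t·A_{ij}} − 1)/A_{ij} if A_{ij} ≠ 0 and λ = tr(A)·t if A_{ij} = 0, and the column move C_{ij,t}(A) = A·(1 + μ·E_{ij}) with μ = tr(A)·(e^{t·A_{ji}} − 1)/A_{ji} if A_{ji} ≠ 0 and μ = tr(A)·t if A_{ji} = 0. Then for every A ∈ M_n(ℂ) with det A = 1 and tr A ≠ 0, and every ε > 0, there exists a finite composition of row moves and column moves (with various indices i ≠ j and times t) that maps A to a matrix B with ‖B − 1‖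 < ε, where 1 is the identity matrix. -/
/- Equip `M_n(ℂ)` with a fixed norm (the elementwise sup norm). -/
attribute [local instance] Matrix.normedAddCommGroup Matrix.normedSpace

/-- The row move `R_{ij,t}(A) = (1 + λ·E_{ji})·A`, where
`λ = tr(A)·(e^{t·A_{ij}} − 1)/A_{ij}` if `A_{ij} ≠ 0` and `λ = tr(A)·t` otherwise;
this is the time-`t` flow map of `V_{ij}(A) = tr(A)·(E_{ji}·A)`. -/
noncomputable def rowMove {n : ℕ} (i j : Fin n) (t : ℂ) (A : Matrix (Fin n) (Fin n) ℂ) :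
    Matrix (Fin n) (Fin n) ℂ :=
  (1 + (if A i j ≠ 0 then A.trace * (Complex.exp (t * A i j) - 1) / A i j
        else A.trace * t) • Matrix.single j i 1) * A

/-- The column move `C_{ij,t}(A) = A·(1 + μ·E_{ij})`, where
`μ = tr(A)·(e^{t·A_{ji}} − 1)/A_{ji}` if `A_{ji} ≠ 0` and `μ = tr(A)·t` otherwise;
this is the time-`t` flow map of `W_{ij}(A) = tr(A)·(A·E_{ij})`. -/
noncomputable def colMove {n : ℕ} (i j : Fin n) (t : ℂ) (A : Matrix (Fin n) (Fin n) ℂ) :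
    Matrix (Fin n) (Fin n) ℂ :=
  A * (1 + (if A j i ≠ 0 then A.trace * (Complex.exp (t * A j i) - 1) / A j i
            else A.trace * t) • Matrix.single i j 1)


section Aux
open Matrix

lemma EE_same {n : ℕ} (i j k : Fin n) (c d : ℂ) :
    single i j c * single j k d = single i k (c * d) :=
  single_mul_single_same (c := c) _ _ _ _

lemma EE_ne {n : ℕ} {i j k l : Fin n} (h : j ≠ k) (c d : ℂ) :
    single i j c * single k l d = 0 :=
  single_mul_single_of_ne (c := c) _ _ _ h _

lemma w_eq {n : ℕ} (i j : Fin n) (hij : i ≠ j) (a : ℂ) (ha : a ≠ 0) :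
    transvection i j a * transvection j i (-a⁻¹) * transvection i j a =
      1 - single i i 1 - single j j 1 + single i j a
        - single j i a⁻¹ := by
  simp only [transvection, mul_add, add_mul, mul_one, one_mul,
    EE_same, EE_ne hij, EE_ne hij.symm, mul_zero, zero_mul, add_zero, zero_add]
  rw [show a * -a⁻¹ = -1 by field_simp, show -a⁻¹ * a = -1 by field_simp]
  ext k l
  by_cases hk : k = i <;> by_cases hl : l = i <;> by_cases hk2 : k = j <;> by_cases hl2 : l = j <;>
    simp_all [single, one_apply] <;> split_ifs <;> simp_all

lemma whitehead_diag {n : ℕ} (i j : Fin n) (hij : i ≠ j) (a : ℂ) (ha : a ≠ 0) :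
    (1 - single i i 1 - single j j 1 + single i j a
        - single j i a⁻¹) *
      (1 - single i i 1 - single j j 1 + single i j (-1)
        - single j i (-1)) =
    diagonal (fun k => if k = i then a else if k = j then a⁻¹ else 1) := by
  simp only [mul_add, add_mul, mul_sub, sub_mul, mul_one, one_mul,
    EE_same, EE_ne hij, EE_ne hij.symm, mul_zero, zero_mul, add_zero, zero_add,
    sub_zero, zero_sub]
  ext k l
  by_cases hk : k = i <;> by_cases hl : l = i <;> by_cases hk2 : k = j <;> by_cases hl2 : l = j <;>
    simp_all [single, one_apply, diagonal] <;> split_ifs <;> simp_all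

/-- `M` is a product of transvections. -/
def IsTP {n : ℕ} (M : Matrix (Fin n) (Fin n) ℂ) : Prop :=
  ∃ L : List (TransvectionStruct (Fin n) ℂ),
    (L.map TransvectionStruct.toMatrix).prod = M

lemma IsTP.one {n : ℕ} : IsTP (1 : Matrix (Fin n) (Fin n) ℂ) := ⟨[], rfl⟩

lemma IsTP.mul {n : ℕ} {M N : Matrix (Fin n) (Fin n) ℂ} (hM : IsTP M) (hN : IsTP N) :
    IsTP (M * N) := by
  obtain ⟨L, hL⟩ := hM; obtain ⟨L', hL'⟩ := hN
  exact ⟨L ++ L', by simp [List.prod_append, hL, hL']⟩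

lemma isTP_whitehead {n : ℕ} (i j : Fin n) (hij : i ≠ j) (a : ℂ) (ha : a ≠ 0) :
    IsTP (diagonal (fun k => if k = i then a else if k = j then a⁻¹ else 1)) := by
  refine ⟨[⟨i, j, hij, a⟩, ⟨j, i, hij.symm, -a⁻¹⟩, ⟨i, j, hij, a⟩,
    ⟨i, j, hij, -1⟩, ⟨j, i, hij.symm, -(-1 : ℂ)⁻¹⟩, ⟨i, j, hij, -1⟩], ?_⟩
  have h2 := w_eq i j hij (-1) (by norm_num)
  have key : (transvection i j a * transvection j i (-a⁻¹) * transvection i j a) *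
      (transvection i j (-1) * transvection j i (-(-1 : ℂ)⁻¹) * transvection i j (-1)) =
      diagonal (fun k => if k = i then a else if k = j then a⁻¹ else 1) := by
    rw [w_eq i j hij a ha, h2, show ((-1 : ℂ))⁻¹ = -1 by norm_num]
    exact whitehead_diag i j hij a ha
  simp only [List.map_cons, List.map_nil, List.prod_cons, List.prod_nil, mul_one,
    TransvectionStruct.toMatrix_mk]
  simpa only [mul_assoc] using key

lemma isTP_diagonal_aux {n : ℕ} (N : ℕ) :
    ∀ d : Fin n → ℂ, (∀ i, d i ≠ 0) → (∏ i, d i) = 1 →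
      (Finset.univ.filter fun i => d i ≠ 1).card ≤ N → IsTP (diagonal d) := by
  induction N with
  | zero =>
    intro d hd hprod hcard
    have : ∀ i, d i = 1 := by
      intro i
      by_contra h
      have : i ∈ Finset.univ.filter fun i => d i ≠ 1 := by simp [h]
      have := Finset.card_pos.mpr ⟨i, this⟩
      omega
    have : d = fun _ => 1 := funext this
    subst this
    simpa [diagonal_one] using IsTP.one
  | succ N ih =>
    intro d hd hprod hcard
    by_cases hall : ∀ i, d i = 1
    · have : d = fun _ => 1 := funext hall
      subst this
      simpa [diagonal_one] using IsTP.one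
    push_neg at hall
    obtain ⟨i, hi⟩ := hall
    -- there must be another index with entry ≠ 1
    have hj : ∃ j, j ≠ i ∧ d j ≠ 1 := by
      by_contra h
      push_neg at h
      have : (∏ k, d k) = d i := by
        rw [← Finset.mul_prod_erase Finset.univ d (Finset.mem_univ i)]
        rw [Finset.prod_eq_one (fun k hk => h k (Finset.ne_of_mem_erase hk)), mul_one]
      rw [this] at hprod
      exact hi hprod
    obtain ⟨j, hji, hj1⟩ := hj
    set d' : Fin n → ℂ := Function.update (Function.update d j (d i * d j)) i 1 with hd'
    have hd'i : d' i = 1 := by simp [hd']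
    have hd'j : d' j = d i * d j := by simp [hd', Function.update_of_ne hji]
    have hd'k : ∀ k, k ≠ i → k ≠ j → d' k = d k := by
      intro k hki hkj
      simp [hd', Function.update_of_ne hki, Function.update_of_ne hkj]
    have hd'0 : ∀ k, d' k ≠ 0 := by
      intro k
      by_cases h1 : k = i
      · rw [h1, hd'i]; norm_num
      by_cases h2 : k = j
      · rw [h2, hd'j]; exact mul_ne_zero (hd i) (hd j)
      · rw [hd'k k h1 h2]; exact hd k
    have hij : i ≠ j := hji.symm
    have hprod' : (∏ k, d' k) = 1 := by
      rw [hd', Finset.prod_update_of_mem (Finset.mem_univ i), one_mul,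
        Finset.prod_update_of_mem (by simp [hji] : j ∈ Finset.univ \ {i})]
      rw [Finset.prod_eq_mul_prod_sdiff_singleton_of_mem (Finset.mem_univ i) d,
        Finset.prod_eq_mul_prod_sdiff_singleton_of_mem (by simp [hji] : j ∈ Finset.univ \ {i}) d]
        at hprod
      linear_combination hprod
    have hcard' : (Finset.univ.filter fun k => d' k ≠ 1).card ≤ N := by
      have hsub : (Finset.univ.filter fun k => d' k ≠ 1) ⊆
          (Finset.univ.filter fun k => d k ≠ 1).erase i := by
        intro k hk
        simp only [Finset.mem_filter, Finset.mem_univ, true_and] at hk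
        have hki : k ≠ i := by rintro rfl; exact hk hd'i
        refine Finset.mem_erase.mpr ⟨hki, ?_⟩
        simp only [Finset.mem_filter, Finset.mem_univ, true_and]
        by_cases h2 : k = j
        · rw [h2]; exact hj1
        · rw [← hd'k k hki h2]; exact hk
      have hicard : i ∈ Finset.univ.filter fun k => d k ≠ 1 := by simp [hi]
      calc (Finset.univ.filter fun k => d' k ≠ 1).card
          ≤ ((Finset.univ.filter fun k => d k ≠ 1).erase i).card := Finset.card_le_card hsub
        _ = (Finset.univ.filter fun k => d k ≠ 1).card - 1 := Finset.card_erase_of_mem hicard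
        _ ≤ N := by omega
    have hIH : IsTP (diagonal d') := ih d' hd'0 hprod' hcard'
    have hfact : diagonal d = diagonal d' *
        diagonal (fun k => if k = i then d i else if k = j then (d i)⁻¹ else 1) := by
      rw [diagonal_mul_diagonal]
      refine congrArg diagonal (funext fun k => ?_)
      by_cases h1 : k = i
      · subst h1; simp [hd'i]
      by_cases h2 : k = j
      · subst h2
        simp only [if_neg h1, if_pos rfl, hd'j]
        rw [mul_comm (d i), mul_assoc]
        simp [mul_inv_cancel₀ (hd i)]
      · simp [h1, h2, hd'k k h1 h2]
    rw [hfact]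
    exact hIH.mul (isTP_whitehead i j hij (d i) (hd i))

lemma isTP_of_det_one {n : ℕ} (M : Matrix (Fin n) (Fin n) ℂ) (h : M.det = 1) : IsTP M := by
  obtain ⟨L, L', D, hM⟩ := Pivot.exists_list_transvec_mul_diagonal_mul_list_transvec M
  have hdet : (diagonal D).det = 1 := by
    have := congrArg det hM
    rw [h, det_mul, det_mul, TransvectionStruct.det_toMatrix_prod,
      TransvectionStruct.det_toMatrix_prod, one_mul, mul_one] at this
    exact this.symm
  rw [det_diagonal] at hdet
  have hD0 : ∀ i, D i ≠ 0 := by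
    intro i hDi
    rw [Finset.prod_eq_zero (Finset.mem_univ i) hDi] at hdet
    exact zero_ne_one hdet
  have hdiag : IsTP (diagonal D) :=
    isTP_diagonal_aux (Finset.univ.filter fun i => D i ≠ 1).card D hD0 hdet le_rfl
  rw [hM]
  exact (IsTP.mul ⟨L, rfl⟩ hdiag).mul ⟨L', rfl⟩

lemma trace_E_mul {n : ℕ} (i j : Fin n) (B : Matrix (Fin n) (Fin n) ℂ) :
    (single i j (1:ℂ) * B).trace = B j i := by
  rw [Matrix.trace, Finset.sum_eq_single i]
  · simp [Matrix.diag]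
  · intro k _ hk
    simp only [Matrix.diag]
    exact single_mul_apply_of_ne (c := 1) i j k k hk B
  · simp

lemma trace_one_add_smul {n : ℕ} (i j : Fin n) (c : ℂ) (B : Matrix (Fin n) (Fin n) ℂ) :
    ((1 + c • single i j (1:ℂ)) * B).trace = B.trace + c * B j i := by
  rw [add_mul, one_mul, trace_add, smul_mul_assoc, trace_smul, trace_E_mul]
  simp [smul_eq_mul]

lemma exists_rowMove_eq {n : ℕ} (B : Matrix (Fin n) (Fin n) ℂ) (htr : B.trace ≠ 0)
    (i j : Fin n) (c : ℂ) (h : B.trace + c * B i j ≠ 0) :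
    ∃ t : ℂ, rowMove i j t B = (1 + c • single j i (1:ℂ)) * B := by
  by_cases hB : B i j = 0
  · refine ⟨c / B.trace, ?_⟩
    rw [rowMove, if_neg (by simpa using hB), mul_div_cancel₀ _ htr]
  · set w : ℂ := (B.trace + c * B i j) / B.trace with hw
    have hw0 : w ≠ 0 := div_ne_zero h htr
    refine ⟨Complex.log w / B i j, ?_⟩
    rw [rowMove, if_pos hB, div_mul_cancel₀ _ hB, Complex.exp_log hw0]
    have hc : B.trace * (w - 1) / B i j = c := by
      rw [hw]
      field_simp
      ring
    rw [hc]

lemma approx_reach {n : ℕ} (A : Matrix (Fin n) (Fin n) ℂ) (htr : A.trace ≠ 0)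
    (L : List (TransvectionStruct (Fin n) ℂ)) :
    ∀ ε : ℝ, 0 < ε →
    ∃ l : List (Matrix (Fin n) (Fin n) ℂ → Matrix (Fin n) (Fin n) ℂ),
      (∀ f ∈ l, ∃ (i j : Fin n) (t : ℂ), i ≠ j ∧ (f = rowMove i j t ∨ f = colMove i j t)) ∧
      (l.foldl (fun B f => f B) A).trace ≠ 0 ∧
      ‖l.foldl (fun B f => f B) A - (L.map TransvectionStruct.toMatrix).prod * A‖ < ε := by
  induction L with
  | nil =>
    intro ε hε
    exact ⟨[], by simp, by simpa using htr, by simpa using hε⟩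
  | cons T L ih =>
    intro ε hε
    obtain ⟨i', j', hij', c⟩ := T
    set C : Matrix (Fin n) (Fin n) ℂ := (L.map TransvectionStruct.toMatrix).prod * A with hC
    have hcont : Continuous (fun p : ℂ × Matrix (Fin n) (Fin n) ℂ =>
        (1 + p.1 • single i' j' (1:ℂ)) * p.2) :=
      (continuous_const.add (continuous_fst.smul continuous_const)).matrix_mul continuous_snd
    obtain ⟨δ, hδ0, hδ⟩ := Metric.continuousAt_iff.mp (hcont.continuousAt (x := (c, C))) ε hε
    obtain ⟨l, hlmem, hltr, hlnorm⟩ := ih δ hδ0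
    set B' := l.foldl (fun B f => f B) A with hB'
    have hex : ∃ c' : ℂ, dist c' c < δ ∧ B'.trace + c' * B' j' i' ≠ 0 := by
      by_cases hbad : B'.trace + c * B' j' i' = 0
      · have he : B' j' i' ≠ 0 := by
          intro h0
          rw [h0, mul_zero, add_zero] at hbad
          exact hltr hbad
        refine ⟨c + (δ/2 : ℝ), ?_, ?_⟩
        · rw [dist_eq_norm]
          simp only [add_sub_cancel_left]
          rw [Complex.norm_real]
          rw [Real.norm_eq_abs, abs_of_pos (by linarith)]
          linarith
        · intro h0
          have hsub : ((δ/2 : ℝ) : ℂ) * B' j' i' = 0 := by linear_combination h0 - hbad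
          rcases mul_eq_zero.mp hsub with h | h
          · have : (δ/2 : ℝ) = 0 := by exact_mod_cast h
            linarith
          · exact he h
      · exact ⟨c, by simpa using hδ0, hbad⟩
    obtain ⟨c', hc'δ, hc'0⟩ := hex
    obtain ⟨t, ht⟩ := exists_rowMove_eq B' hltr j' i' c' hc'0
    refine ⟨l ++ [rowMove j' i' t], ?_, ?_, ?_⟩
    · intro f hf
      rcases List.mem_append.mp hf with h | h
      · exact hlmem f h
      · rw [List.mem_singleton] at h
        exact ⟨j', i', t, hij'.symm, Or.inl h⟩
    · rw [List.foldl_append]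
      simp only [List.foldl_cons, List.foldl_nil]
      rw [← hB', ht, trace_one_add_smul]
      exact hc'0
    · rw [List.foldl_append]
      simp only [List.foldl_cons, List.foldl_nil]
      rw [← hB', ht]
      have hprod : (List.map TransvectionStruct.toMatrix
          ((⟨i', j', hij', c⟩ : TransvectionStruct (Fin n) ℂ) :: L)).prod * A =
          (1 + c • single i' j' (1:ℂ)) * C := by
        rw [List.map_cons, List.prod_cons, mul_assoc, ← hC,
          TransvectionStruct.toMatrix_mk, transvection]
        congr 2
        rw [smul_single]
        norm_num
      rw [hprod]
      have hd : dist (c', B') (c, C) < δ := by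
        rw [Prod.dist_eq]
        exact max_lt hc'δ (by rwa [dist_eq_norm])
      have h2 := hδ hd
      simpa [dist_eq_norm] using h2

end Aux

/-- For every `A ∈ M_n(ℂ)` with `det A = 1` and `tr A ≠ 0`, and every `ε > 0`, there
exists a finite composition of row moves and column moves (with various indices `i ≠ j`
and times `t`) that maps `A` to a matrix `B` with `‖B − 1‖ < ε`. -/
theorem stmt_11 (n : ℕ) (hn : 2 ≤ n) (A : Matrix (Fin n) (Fin n) ℂ)
    (hdet : A.det = 1) (htr : A.trace ≠ 0) (ε : ℝ) (hε : 0 < ε) :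
    ∃ l : List (Matrix (Fin n) (Fin n) ℂ → Matrix (Fin n) (Fin n) ℂ),
      (∀ f ∈ l, ∃ (i j : Fin n) (t : ℂ), i ≠ j ∧ (f = rowMove i j t ∨ f = colMove i j t)) ∧
      ‖l.foldl (fun B f => f B) A - 1‖ < ε := by
  have hdetinv : (A⁻¹).det = 1 := by
    rw [Matrix.det_nonsing_inv, hdet, Ring.inverse_one]
  obtain ⟨L, hL⟩ := isTP_of_det_one A⁻¹ hdetinv
  obtain ⟨l, hmem, _, hnorm⟩ := approx_reach A htr L ε hε
  refine ⟨l, hmem, ?_⟩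
  rwa [hL, Matrix.nonsing_inv_mul A (by rw [hdet]; exact isUnit_one)] at hnorm
end

section
/- Let n ≥ 3 and define the vector field W on M_n(ℂ) by W(A) = (A_{23}·E_{12} − A_{21}·E_{32})·A. Then for every A ∈ M_n(ℂ): (i) the complex Fréchet derivative of det at A evaluated at W(A) equals 0; (ii) the complex Fréchet derivative of tr at A evaluated at W(A) equals 0; (iii) the complex Fréchet derivative of the coordinate function A ↦ A_{11} at A evaluated at W(A) equals A_{23}·A_{21}; and (iv) the complex Fréchet derivative of the function A ↦ A_{23}·A_{21} at A evaluated at W(A) equals 0. In particular W is tangent to SL_n(ℂ) and to {tr = 0}, and W(a₁₁) = a₂₃a₂₁ is a nonzero element of the kernel of W as a derivation. -/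
/- Equip `M_n(ℂ)` with the (elementwise sup) norm, identifying it with `ℂ^{n²}`;
derivatives do not depend on the choice of norm. -/
attribute [local instance] Matrix.normedAddCommGroup Matrix.normedSpace

/-- The vector field `W(A) = (A_{23}·E_{12} − A_{21}·E_{32})·A` on `M_n(ℂ)`, `n ≥ 3`
(1-based matrix-entry indexing, so e.g. `A_{23}` is `A ⟨1⟩ ⟨2⟩` with 0-based `Fin n`
indices). -/
noncomputable def Wfield (n : ℕ) (hn : 3 ≤ n) (A : Matrix (Fin n) (Fin n) ℂ) :
    Matrix (Fin n) (Fin n) ℂ :=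
  (A ⟨1, by omega⟩ ⟨2, by omega⟩ • Matrix.single ⟨0, by omega⟩ ⟨1, by omega⟩ 1 -
   A ⟨1, by omega⟩ ⟨0, by omega⟩ • Matrix.single ⟨2, by omega⟩ ⟨1, by omega⟩ 1) * A

lemma Wfield_apply (n : ℕ) (hn : 3 ≤ n) (A : Matrix (Fin n) (Fin n) ℂ) (i j : Fin n) :
    Wfield n hn A i j =
      (if i = ⟨0, by omega⟩ then A ⟨1, by omega⟩ ⟨2, by omega⟩ * A ⟨1, by omega⟩ j
       else if i = ⟨2, by omega⟩ then -(A ⟨1, by omega⟩ ⟨0, by omega⟩ * A ⟨1, by omega⟩ j)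
       else 0) := by
  rw [Wfield, Matrix.sub_mul, Matrix.smul_mul, Matrix.smul_mul, Matrix.sub_apply,
    Matrix.smul_apply, Matrix.smul_apply, smul_eq_mul, smul_eq_mul]
  by_cases h1 : i = (⟨0, by omega⟩ : Fin n)
  · subst h1
    rw [Matrix.single_mul_apply_same,
      Matrix.single_mul_apply_of_ne _ _ _ _ _ (by simp [Fin.ext_iff])]
    simp
  · by_cases h2 : i = (⟨2, by omega⟩ : Fin n)
    · subst h2
      rw [Matrix.single_mul_apply_same,
        Matrix.single_mul_apply_of_ne _ _ _ _ _ (by simp [Fin.ext_iff])]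
      simp [h1]
    · rw [Matrix.single_mul_apply_of_ne _ _ _ _ _ h1,
        Matrix.single_mul_apply_of_ne _ _ _ _ _ h2]
      simp [h1, h2]

/-- det as a continuous multilinear map of the rows. -/
noncomputable def detCM (n : ℕ) :
    ContinuousMultilinearMap ℂ (fun _ : Fin n => (Fin n → ℂ)) ℂ :=
  { (Matrix.detRowAlternating : (Fin n → ℂ) [⋀^Fin n]→ₗ[ℂ] ℂ).toMultilinearMap with
    cont := by
      have : Continuous fun M : Matrix (Fin n) (Fin n) ℂ => M.det := continuous_id.matrix_det
      exact this }

noncomputable def entryCLM (n : ℕ) (i j : Fin n) :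
    Matrix (Fin n) (Fin n) ℂ →L[ℂ] ℂ :=
  LinearMap.toContinuousLinearMap
    { toFun := fun B => B i j
      map_add' := fun _ _ => rfl
      map_smul' := fun _ _ => rfl }

/-- For every `A ∈ M_n(ℂ)` (`n ≥ 3`): (i) the complex Fréchet derivative of `det` at `A`
evaluated at `W(A)` equals `0`; (ii) that of `tr` equals `0`; (iii) that of `A ↦ A_{11}`
equals `A_{23}·A_{21}`; and (iv) that of `A ↦ A_{23}·A_{21}` equals `0`. In particular
`W` is tangent to `SL_n(ℂ)` and to `{tr = 0}`, and `W(a₁₁) = a₂₃a₂₁` is a nonzero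
element of the kernel of `W` as a derivation. -/
theorem stmt_12 (n : ℕ) (hn : 3 ≤ n) (A : Matrix (Fin n) (Fin n) ℂ) :
    fderiv ℂ Matrix.det A (Wfield n hn A) = 0 ∧
    fderiv ℂ Matrix.trace A (Wfield n hn A) = 0 ∧
    fderiv ℂ (fun B : Matrix (Fin n) (Fin n) ℂ => B ⟨0, by omega⟩ ⟨0, by omega⟩) A
        (Wfield n hn A) = A ⟨1, by omega⟩ ⟨2, by omega⟩ * A ⟨1, by omega⟩ ⟨0, by omega⟩ ∧
    fderiv ℂ (fun B : Matrix (Fin n) (Fin n) ℂ =>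
        B ⟨1, by omega⟩ ⟨2, by omega⟩ * B ⟨1, by omega⟩ ⟨0, by omega⟩) A
        (Wfield n hn A) = 0 := by
  have h0 : (0 : ℕ) < n := by omega
  have h1 : (1 : ℕ) < n := by omega
  have h2 : (2 : ℕ) < n := by omega
  set i0 : Fin n := ⟨0, h0⟩
  set i1 : Fin n := ⟨1, h1⟩
  set i2 : Fin n := ⟨2, h2⟩
  have hW : ∀ i j : Fin n, Wfield n hn A i j = (if i = i0 then A i1 i2 * A i1 j
      else if i = i2 then -(A i1 i0 * A i1 j) else 0) := Wfield_apply n hn A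
  have h01 : i0 ≠ i1 := by simp [i0, i1, Fin.ext_iff]
  have h02 : i0 ≠ i2 := by simp [i0, i2, Fin.ext_iff]
  have h21 : i2 ≠ i1 := by simp [i2, i1, Fin.ext_iff]
  -- entry derivative facts
  have hE : ∀ i j : Fin n, HasFDerivAt (fun B : Matrix (Fin n) (Fin n) ℂ => B i j)
      (entryCLM n i j) A := fun i j => (entryCLM n i j).hasFDerivAt
  refine ⟨?_, ?_, ?_, ?_⟩
  · -- det
    have hdet : @HasFDerivAt ℂ _ (Matrix (Fin n) (Fin n) ℂ) inferInstance inferInstance inferInstance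
        ℂ _ _ _ Matrix.det ((detCM n).linearDeriv A) A := (detCM n).hasFDerivAt A
    rw [hdet.fderiv]
    refine (ContinuousMultilinearMap.linearDeriv_apply _ _ _).trans ?_
    refine Finset.sum_eq_zero fun i _ => ?_
    have hup : (Function.update A i (Wfield n hn A i) : Matrix (Fin n) (Fin n) ℂ) =
        A.updateRow i (Wfield n hn A i) := rfl
    show Matrix.det (Function.update A i (Wfield n hn A i)) = 0
    rw [hup]
    by_cases hi0 : i = i0
    · subst hi0
      have hrow : Wfield n hn A i0 = A i1 i2 • A i1 := by
        funext j; rw [hW]; simp [smul_eq_mul]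
      rw [hrow, Matrix.det_updateRow_smul]
      rw [Matrix.det_zero_of_row_eq h01 (by simp [Matrix.updateRow_self,
        Matrix.updateRow_ne h01.symm])]
      simp
    · by_cases hi2 : i = i2
      · subst hi2
        have hrow : Wfield n hn A i2 = (-A i1 i0) • A i1 := by
          funext j; rw [hW]; simp [Ne.symm h02, smul_eq_mul]
        rw [hrow, Matrix.det_updateRow_smul]
        rw [Matrix.det_zero_of_row_eq h21 (by simp [Matrix.updateRow_self,
          Matrix.updateRow_ne h21.symm])]
        simp
      · have hrow : Wfield n hn A i = 0 := by
          funext j; rw [hW]; simp [hi0, hi2]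
        rw [hrow]
        exact Matrix.det_eq_zero_of_row_eq_zero i (by simp)
  · -- trace
    have hT : HasFDerivAt Matrix.trace
        (LinearMap.toContinuousLinearMap (Matrix.traceLinearMap (Fin n) ℂ ℂ)) A :=
      (LinearMap.toContinuousLinearMap (Matrix.traceLinearMap (Fin n) ℂ ℂ)).hasFDerivAt
    rw [hT.fderiv]
    show Matrix.trace (Wfield n hn A) = 0
    rw [Matrix.trace]
    have : ∀ i : Fin n, Matrix.diag (Wfield n hn A) i =
        (if i = i0 then A i1 i2 * A i1 i0 else 0) +
        (if i = i2 then -(A i1 i0 * A i1 i2) else 0) := by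
      intro i
      rw [Matrix.diag_apply, hW]
      by_cases hi0 : i = i0
      · subst hi0; simp [h02]
      · by_cases hi2 : i = i2 <;> simp [hi0, hi2, Ne.symm h02]
    rw [Finset.sum_congr rfl fun i _ => this i, Finset.sum_add_distrib]
    simp [Finset.sum_ite_eq']
    ring
  · -- a11
    rw [(hE i0 i0).fderiv]
    show Wfield n hn A i0 i0 = A i1 i2 * A i1 i0
    rw [hW]; simp
  · -- a23 a21
    have h10 : i1 ≠ i0 := h01.symm
    have h12 : i1 ≠ i2 := by simp [i1, i2, Fin.ext_iff]
    have hmul := ((hE i1 i2).mul (hE i1 i0)).fderiv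
    erw [hmul]
    show A i1 i2 * Wfield n hn A i1 i0 + A i1 i0 * Wfield n hn A i1 i2 = 0
    rw [hW, hW]
    simp [h10, h12]
end
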